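/- Wielandt's inequality: if A and B are p×p real symmetric matrices, then for all j = 1,…,p and every k with 1 ≤ k ≤ j, λ_j(A+B) ≤ λ_{j-k+1}(A) + λ_k(B), where λ_i(M) denotes the i-th largest eigenvalue of M. -/

import Mathlib

/-!
Courant–Fischer in its simplest form: if `M = U diag(e) Uᵀ` with `U` orthogonal and `e`
decreasing, then on the span of the columns `t, t+1, …` of `U` (dimension `p - t`) the quadratic
form `x ↦ xᵀ M x` is at most `e t ‖x‖²`, and on the span of the columns `0, …, t` (dimension
`t + 1`) it is at least `e t ‖x‖²`. Take the first kind of subspace for `A` at `j - k` and for `B`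
at `k`, and the second kind for `A + B` at `j`: their dimensions add up to `2p + 1`, so they share
a nonzero vector `x`, and `xᵀ (A + B) x = xᵀ A x + xᵀ B x` gives the inequality.
-/

open Matrix

/-- `e` enumerates the eigenvalues of the real symmetric matrix `M` in decreasing order:
`e` is antitone and `M = U * diagonal e * Uᵀ` for some orthogonal `U`. -/
def IsDecrEigSeq {p : ℕ} (M : Matrix (Fin p) (Fin p) ℝ) (e : Fin p → ℝ) : Prop :=
  Antitone e ∧ ∃ U : Matrix (Fin p) (Fin p) ℝ, Uᵀ * U = 1 ∧ M = U * Matrix.diagonal e * Uᵀ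

open Module

namespace Matrix

section Quadratic

variable {n R : Type*} [Fintype n] [DecidableEq n] [CommRing R]

theorem dotProduct_mulVec_conj_diagonal (U : Matrix n n R) (e : n → R) (x : n → R) :
    x ⬝ᵥ ((U * diagonal e * Uᵀ) *ᵥ x) = ∑ i, e i * (Uᵀ *ᵥ x) i ^ 2 := by
  rw [← mulVec_mulVec, ← mulVec_mulVec, dotProduct_mulVec, ← mulVec_transpose]
  simp only [dotProduct, mulVec_diagonal, sq]
  exact Finset.sum_congr rfl fun i _ => by ring

theorem sum_sq_transpose_mulVec {U : Matrix n n R} (hU : Uᵀ * U = 1) (x : n → R) :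
    ∑ i, (Uᵀ *ᵥ x) i ^ 2 = x ⬝ᵥ x := by
  have hU' : U * Uᵀ = 1 := mul_eq_one_comm.mp hU
  simp only [sq, ← dotProduct.eq_1]
  rw [dotProduct_mulVec, ← mulVec_transpose, transpose_transpose, mulVec_mulVec, hU', one_mulVec]

end Quadratic

section VanishingSubmodule

variable {n K : Type*} [Fintype n] [Field K]

def vanishingSubmodule (U : Matrix n n K) (S : Finset n) : Submodule K (n → K) :=
  LinearMap.ker ((LinearMap.funLeft K K ((↑) : S → n)).comp Uᵀ.mulVecLin)

theorem mem_vanishingSubmodule {U : Matrix n n K} {S : Finset n} {x : n → K} :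
    x ∈ U.vanishingSubmodule S ↔ ∀ i ∈ S, (Uᵀ *ᵥ x) i = 0 := by
  simp [vanishingSubmodule, funext_iff, LinearMap.funLeft_apply, mulVec_transpose]

theorem card_le_finrank_vanishingSubmodule_add_card (U : Matrix n n K) (S : Finset n) :
    Fintype.card n ≤ finrank K (U.vanishingSubmodule S) + S.card := by
  set f := (LinearMap.funLeft K K ((↑) : S → n)).comp Uᵀ.mulVecLin
  have h := f.finrank_range_add_finrank_ker
  have := (LinearMap.range f).finrank_le
  simp only [finrank_fintype_fun_eq_card, Fintype.card_coe] at h this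
  change Fintype.card n ≤ finrank K (LinearMap.ker f) + S.card
  omega

end VanishingSubmodule

end Matrix

section Antitone

variable {ι R : Type*} [Fintype ι] [LinearOrder ι] [CommRing R] [LinearOrder R]
  [IsStrictOrderedRing R] {e y : ι → R} {t : ι}

theorem Antitone.sum_mul_sq_le (he : Antitone e) (hy : ∀ i < t, y i = 0) :
    ∑ i, e i * y i ^ 2 ≤ e t * ∑ i, y i ^ 2 := by
  rw [Finset.mul_sum]
  refine Finset.sum_le_sum fun i _ => ?_
  rcases lt_or_ge i t with h | h
  · simp [hy i h]
  · exact mul_le_mul_of_nonneg_right (he h) (sq_nonneg _)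

theorem Antitone.mul_sum_sq_le (he : Antitone e) (hy : ∀ i, t < i → y i = 0) :
    e t * ∑ i, y i ^ 2 ≤ ∑ i, e i * y i ^ 2 := by
  rw [Finset.mul_sum]
  refine Finset.sum_le_sum fun i _ => ?_
  rcases lt_or_ge t i with h | h
  · simp [hy i h]
  · exact mul_le_mul_of_nonneg_right (he h) (sq_nonneg _)

end Antitone

theorem Submodule.exists_ne_zero_mem_inf_inf {K V : Type*} [DivisionRing K] [AddCommGroup V]
    [Module K V] [FiniteDimensional K V] {W₁ W₂ W₃ : Submodule K V}
    (h : 2 * finrank K V < finrank K W₁ + finrank K W₂ + finrank K W₃) :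
    ∃ x ∈ W₁, x ∈ W₂ ∧ x ∈ W₃ ∧ x ≠ 0 := by
  have h₁₂ := finrank_sup_add_finrank_inf_eq W₁ W₂
  have h₁₂₃ := finrank_sup_add_finrank_inf_eq (W₁ ⊓ W₂) W₃
  have := (W₁ ⊔ W₂).finrank_le
  have := (W₁ ⊓ W₂ ⊔ W₃).finrank_le
  have hne : W₁ ⊓ W₂ ⊓ W₃ ≠ ⊥ := one_le_finrank_iff.mp (by omega)
  obtain ⟨x, ⟨⟨hx₁, hx₂⟩, hx₃⟩, hx0⟩ := exists_mem_ne_zero_of_ne_bot hne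
  exact ⟨x, hx₁, hx₂, hx₃, hx0⟩

namespace IsDecrEigSeq

variable {p : ℕ} {M : Matrix (Fin p) (Fin p) ℝ} {e : Fin p → ℝ}

theorem exists_submodule_le (h : IsDecrEigSeq M e) (t : Fin p) :
    ∃ W : Submodule ℝ (Fin p → ℝ), p ≤ finrank ℝ W + t ∧
      ∀ x ∈ W, x ⬝ᵥ (M *ᵥ x) ≤ e t * (x ⬝ᵥ x) := by
  obtain ⟨he, U, hU, rfl⟩ := h
  refine ⟨U.vanishingSubmodule (Finset.Iio t), ?_, fun x hx => ?_⟩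
  · simpa using U.card_le_finrank_vanishingSubmodule_add_card (Finset.Iio t)
  · rw [dotProduct_mulVec_conj_diagonal, ← sum_sq_transpose_mulVec hU x]
    exact he.sum_mul_sq_le fun i hi => mem_vanishingSubmodule.mp hx i (by simpa using hi)

theorem exists_submodule_ge (h : IsDecrEigSeq M e) (t : Fin p) :
    ∃ W : Submodule ℝ (Fin p → ℝ), t + 1 ≤ finrank ℝ W ∧
      ∀ x ∈ W, e t * (x ⬝ᵥ x) ≤ x ⬝ᵥ (M *ᵥ x) := by
  obtain ⟨he, U, hU, rfl⟩ := h
  refine ⟨U.vanishingSubmodule (Finset.Ioi t), ?_, fun x hx => ?_⟩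
  · have := U.card_le_finrank_vanishingSubmodule_add_card (Finset.Ioi t)
    rw [Fin.card_Ioi, Fintype.card_fin] at this
    omega
  · rw [dotProduct_mulVec_conj_diagonal, ← sum_sq_transpose_mulVec hU x]
    exact he.mul_sum_sq_le fun i hi => mem_vanishingSubmodule.mp hx i (by simpa using hi)

end IsDecrEigSeq

theorem wielandt_upper_general {p : ℕ} (A B : Matrix (Fin p) (Fin p) ℝ)
    (eA eB eAB : Fin p → ℝ)
    (hEA : IsDecrEigSeq A eA) (hEB : IsDecrEigSeq B eB) (hEAB : IsDecrEigSeq (A + B) eAB)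
    (j k : Fin p) (hkj : (k : ℕ) ≤ (j : ℕ)) :
    eAB j ≤ eA ⟨(j : ℕ) - (k : ℕ), lt_of_le_of_lt (Nat.sub_le _ _) j.isLt⟩ + eB k := by
  obtain ⟨WA, hWA, hA⟩ := hEA.exists_submodule_le ⟨(j : ℕ) - (k : ℕ), by omega⟩
  obtain ⟨WB, hWB, hB⟩ := hEB.exists_submodule_le k
  obtain ⟨WC, hWC, hC⟩ := hEAB.exists_submodule_ge j
  obtain ⟨x, hxA, hxB, hxC, hx0⟩ :=
    Submodule.exists_ne_zero_mem_inf_inf (W₁ := WA) (W₂ := WB) (W₃ := WC)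
      (by rw [finrank_fin_fun]; rw [Fin.val_mk] at hWA; omega)
  have hx : 0 < x ⬝ᵥ x := by simpa using dotProduct_self_star_pos_iff.mpr hx0
  refine le_of_mul_le_mul_right ?_ hx
  calc eAB j * (x ⬝ᵥ x) ≤ x ⬝ᵥ ((A + B) *ᵥ x) := hC x hxC
    _ = x ⬝ᵥ (A *ᵥ x) + x ⬝ᵥ (B *ᵥ x) := by rw [add_mulVec, dotProduct_add]
    _ ≤ eA _ * (x ⬝ᵥ x) + eB k * (x ⬝ᵥ x) := add_le_add (hA x hxA) (hB x hxB)
    _ = _ := by ring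

/-- Wielandt's inequality (upper bound): for real symmetric `A, B`,
`λ_j(A+B) ≤ λ_{j-k+1}(A) + λ_k(B)` for all `1 ≤ k ≤ j ≤ p` (here `0`-indexed:
`λ_j(A+B) ≤ λ_{j-k}(A) + λ_k(B)` for `k ≤ j`). -/
theorem wielandt_upper {p : ℕ} (A B : Matrix (Fin p) (Fin p) ℝ)
    (hA : A.IsSymm) (hB : B.IsSymm)
    (eA eB eAB : Fin p → ℝ)
    (hEA : IsDecrEigSeq A eA) (hEB : IsDecrEigSeq B eB) (hEAB : IsDecrEigSeq (A + B) eAB)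
    (j k : Fin p) (hkj : (k : ℕ) ≤ (j : ℕ)) :
    eAB j ≤ eA ⟨(j : ℕ) - (k : ℕ), lt_of_le_of_lt (Nat.sub_le _ _) j.isLt⟩ + eB k :=
  wielandt_upper_general A B eA eB eAB hEA hEB hEAB j k hkj
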